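/- The canonical μIS5-model M_c = (W_c, ∅, ⊆, ≡_c, V_c), where W_c is the set of μIS5-theories, ⪯_c is inclusion, ≡_c is the canonical modal relation, and V_c(P) = {Γ : P ∈ Γ}, is an IS5-model: ⊆ is a preorder, ≡_c is an equivalence relation that is forward and backward confluent, propositional truth is persistent along ⊆, and there are no fallible worlds. -/
import Mathlib


/-- Constructive μ-formulas. -/
inductive Fml : Type where
  | prop : ℕ → Fml
  | var : ℕ → Fml
  | bot : Fml
  | top : Fml
  | neg : Fml → Fml
  | and : Fml → Fml → Fml
  | or : Fml → Fml → Fml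
  | imp : Fml → Fml → Fml
  | box : Fml → Fml
  | dia : Fml → Fml
  | mu : ℕ → Fml → Fml
  | nu : ℕ → Fml → Fml

mutual
  /-- `X` occurs only positively in `φ`. -/
  inductive PosIn : ℕ → Fml → Prop where
    | prop {x p} : PosIn x (.prop p)
    | bot {x} : PosIn x .bot
    | top {x} : PosIn x .top
    | var {x} : PosIn x (.var x)
    | varNe {x y} : x ≠ y → PosIn x (.var y)
    | neg {x φ} : NegIn x φ → PosIn x (.neg φ)
    | and {x φ ψ} : PosIn x φ → PosIn x ψ → PosIn x (.and φ ψ)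
    | or {x φ ψ} : PosIn x φ → PosIn x ψ → PosIn x (.or φ ψ)
    | imp {x φ ψ} : NegIn x φ → PosIn x ψ → PosIn x (.imp φ ψ)
    | box {x φ} : PosIn x φ → PosIn x (.box φ)
    | dia {x φ} : PosIn x φ → PosIn x (.dia φ)
    | muSelf {x φ} : PosIn x (.mu x φ)
    | mu {x y φ} : x ≠ y → PosIn x φ → PosIn x (.mu y φ)
    | nuSelf {x φ} : PosIn x (.nu x φ)
    | nu {x y φ} : x ≠ y → PosIn x φ → PosIn x (.nu y φ)
  /-- `X` occurs only negatively in `φ`. -/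
  inductive NegIn : ℕ → Fml → Prop where
    | prop {x p} : NegIn x (.prop p)
    | bot {x} : NegIn x .bot
    | top {x} : NegIn x .top
    | varNe {x y} : x ≠ y → NegIn x (.var y)
    | neg {x φ} : PosIn x φ → NegIn x (.neg φ)
    | and {x φ ψ} : NegIn x φ → NegIn x ψ → NegIn x (.and φ ψ)
    | or {x φ ψ} : NegIn x φ → NegIn x ψ → NegIn x (.or φ ψ)
    | imp {x φ ψ} : PosIn x φ → NegIn x ψ → NegIn x (.imp φ ψ)
    | box {x φ} : NegIn x φ → NegIn x (.box φ)
    | dia {x φ} : NegIn x φ → NegIn x (.dia φ)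
    | muSelf {x φ} : NegIn x (.mu x φ)
    | mu {x y φ} : x ≠ y → NegIn x φ → NegIn x (.mu y φ)
    | nuSelf {x φ} : NegIn x (.nu x φ)
    | nu {x y φ} : x ≠ y → NegIn x φ → NegIn x (.nu y φ)
end

/-- Bi-relational CK-models of Mendler and de Paiva. -/
structure CKModel (W : Type) where
  fall : Set W
  le : W → W → Prop
  R : W → W → Prop
  V : ℕ → Set W
  le_refl : ∀ w, le w w
  le_trans : ∀ {w v u}, le w v → le v u → le w u
  persist : ∀ p {w v}, le w v → w ∈ V p → v ∈ V p
  fall_V : ∀ p, fall ⊆ V p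
  fall_le : ∀ {w v}, w ∈ fall → le w v → v ∈ fall
  fall_R : ∀ {w v}, w ∈ fall → R w v → v ∈ fall

/-- Bi-relational semantics with an environment `ρ` for the variables.
Fixed points are interpreted via Knaster–Tarski. -/
def sem {W : Type} (M : CKModel W) : (ℕ → Set W) → Fml → Set W
  | ρ, .prop p => M.V p
  | ρ, .var x => ρ x
  | _, .bot => M.fall
  | _, .top => Set.univ
  | ρ, .neg φ => {w | ∀ v, M.le w v → v ∉ sem M ρ φ}
  | ρ, .and φ ψ => sem M ρ φ ∩ sem M ρ ψ
  | ρ, .or φ ψ => sem M ρ φ ∪ sem M ρ ψ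
  | ρ, .imp φ ψ => {w | ∀ v, M.le w v → v ∈ sem M ρ φ → v ∈ sem M ρ ψ}
  | ρ, .box φ => {w | ∀ v u, M.le w v → M.R v u → u ∈ sem M ρ φ}
  | ρ, .dia φ => {w | ∀ v, M.le w v → ∃ u, M.R v u ∧ u ∈ sem M ρ φ}
  | ρ, .mu x φ => ⋂₀ {A | sem M (Function.update ρ x A) φ ⊆ A}
  | ρ, .nu x φ => ⋃₀ {A | A ⊆ sem M (Function.update ρ x A) φ}

/-- IS5-models: CK-models with no fallible worlds, whose modal relation is an
equivalence relation that is forward and backward confluent with `⪯`. -/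
structure IS5Model (W : Type) extends CKModel W where
  fall_empty : fall = ∅
  R_equiv : Equivalence R
  forward : ∀ {w v w'}, R w v → le w w' → ∃ v', le v v' ∧ R w' v'
  backward : ∀ {w v v'}, R w v → le v v' → ∃ w', le w w' ∧ R w' v'

/-- Ordinal-indexed approximants of a least fixed point. -/
noncomputable def muApprox {W : Type} (Γ : Set W → Set W) (α : Ordinal) : Set W :=
  Ordinal.limitRecOn α ∅ (fun _ A => Γ A) (fun o _ ih => ⋃ β : Set.Iio o, ih β.1 β.2)

/-- Ordinal-indexed approximants of a greatest fixed point. -/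
noncomputable def nuApprox {W : Type} (Γ : Set W → Set W) (α : Ordinal) : Set W :=
  Ordinal.limitRecOn α Set.univ (fun _ A => Γ A) (fun o _ ih => ⋂ β : Set.Iio o, ih β.1 β.2)

/-- `φ` is a modal formula: it contains no fixed-point operators. -/
def NoFix : Fml → Prop
  | .mu _ _ => False
  | .nu _ _ => False
  | .neg φ => NoFix φ
  | .box φ => NoFix φ
  | .dia φ => NoFix φ
  | .and φ ψ => NoFix φ ∧ NoFix ψ
  | .or φ ψ => NoFix φ ∧ NoFix ψ
  | .imp φ ψ => NoFix φ ∧ NoFix ψ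
  | _ => True

/-- Number of free occurrences of the variable `x` in a formula. -/
def varCount (x : ℕ) : Fml → ℕ
  | .var y => if y = x then 1 else 0
  | .neg φ => varCount x φ
  | .box φ => varCount x φ
  | .dia φ => varCount x φ
  | .and φ ψ => varCount x φ + varCount x ψ
  | .or φ ψ => varCount x φ + varCount x ψ
  | .imp φ ψ => varCount x φ + varCount x ψ
  | .mu y φ => if y = x then 0 else varCount x φ
  | .nu y φ => if y = x then 0 else varCount x φ
  | _ => 0

/-- A formula is closed iff it has no free variables. -/
def Closed (φ : Fml) : Prop := ∀ x, varCount x φ = 0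

/-- Well-formedness: every fixed-point operator binds a positive variable. -/
def WF : Fml → Prop
  | .mu x φ => PosIn x φ ∧ WF φ
  | .nu x φ => PosIn x φ ∧ WF φ
  | .neg φ => WF φ
  | .box φ => WF φ
  | .dia φ => WF φ
  | .and φ ψ => WF φ ∧ WF ψ
  | .or φ ψ => WF φ ∧ WF ψ
  | .imp φ ψ => WF φ ∧ WF ψ
  | _ => True

/-- Substitution of the formula `σ` for the free occurrences of the variable `x`. -/
def subst (x : ℕ) (σ : Fml) : Fml → Fml
  | .var y => if y = x then σ else .var y
  | .prop p => .prop p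
  | .bot => .bot
  | .top => .top
  | .neg φ => .neg (subst x σ φ)
  | .and φ ψ => .and (subst x σ φ) (subst x σ ψ)
  | .or φ ψ => .or (subst x σ φ) (subst x σ ψ)
  | .imp φ ψ => .imp (subst x σ φ) (subst x σ ψ)
  | .box φ => .box (subst x σ φ)
  | .dia φ => .dia (subst x σ φ)
  | .mu y φ => if y = x then .mu y φ else .mu y (subst x σ φ)
  | .nu y φ => if y = x then .nu y φ else .nu y (subst x σ φ)

def Fml.iff (φ ψ : Fml) : Fml := .and (.imp φ ψ) (.imp ψ φ)

/-- The axioms of μIS5: intuitionistic axioms, the modal axioms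
K□, K◇, FS, DP, N, T, 4, 5, and the fixed-point axioms νFP and μFP. -/
inductive Ax : Fml → Prop where
  | k1 (φ ψ) : Ax (.imp φ (.imp ψ φ))
  | k2 (φ ψ χ) : Ax (.imp (.imp φ (.imp ψ χ)) (.imp (.imp φ ψ) (.imp φ χ)))
  | andI (φ ψ) : Ax (.imp φ (.imp ψ (.and φ ψ)))
  | andE1 (φ ψ) : Ax (.imp (.and φ ψ) φ)
  | andE2 (φ ψ) : Ax (.imp (.and φ ψ) ψ)
  | orI1 (φ ψ) : Ax (.imp φ (.or φ ψ))
  | orI2 (φ ψ) : Ax (.imp ψ (.or φ ψ))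
  | orE (φ ψ χ) : Ax (.imp (.imp φ χ) (.imp (.imp ψ χ) (.imp (.or φ ψ) χ)))
  | botE (φ) : Ax (.imp .bot φ)
  | topI : Ax .top
  | negI (φ) : Ax (.imp (.imp φ .bot) (.neg φ))
  | negE (φ) : Ax (.imp (.neg φ) (.imp φ .bot))
  | kBox (φ ψ) : Ax (.imp (.box (.imp φ ψ)) (.imp (.box φ) (.box ψ)))
  | kDia (φ ψ) : Ax (.imp (.box (.imp φ ψ)) (.imp (.dia φ) (.dia ψ)))
  | fs (φ ψ) : Ax (.imp (.imp (.dia φ) (.box ψ)) (.box (.imp φ ψ)))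
  | dp (φ ψ) : Ax (.imp (.dia (.or φ ψ)) (.or (.dia φ) (.dia ψ)))
  | n : Ax (.neg (.dia .bot))
  | t1 (φ) : Ax (.imp (.box φ) φ)
  | t2 (φ) : Ax (.imp φ (.dia φ))
  | four1 (φ) : Ax (.imp (.box φ) (.box (.box φ)))
  | four2 (φ) : Ax (.imp (.dia (.dia φ)) (.dia φ))
  | five1 (φ) : Ax (.imp (.dia φ) (.box (.dia φ)))
  | five2 (φ) : Ax (.imp (.dia (.box φ)) (.box φ))
  | nuFP (x φ) : PosIn x φ → Ax (.imp (.nu x φ) (subst x (.nu x φ) φ))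
  | muFP (x φ) : PosIn x φ → Ax (.imp (subst x (.mu x φ) φ) (.mu x φ))

/-- Provability in μIS5: closure of the axioms under modus ponens,
necessitation, and the two fixed-point induction rules. -/
inductive Prov : Fml → Prop where
  | ax {φ} : Ax φ → Prov φ
  | mp {φ ψ} : Prov (.imp φ ψ) → Prov φ → Prov ψ
  | nec {φ} : Prov φ → Prov (.box φ)
  | nuInd {x φ ψ} : PosIn x φ → Prov (.imp ψ (subst x ψ φ)) → Prov (.imp ψ (.nu x φ))
  | muInd {x φ ψ} : PosIn x φ → Prov (.imp (subst x ψ φ) ψ) → Prov (.imp (.mu x φ) ψ)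

/-- μIS5-theories: contain all axioms, closed under modus ponens,
consistent, and with the disjunction property. -/
structure IsTheory (Γ : Set Fml) : Prop where
  ax_mem : ∀ φ, Ax φ → φ ∈ Γ
  mp_closed : ∀ φ ψ, Fml.imp φ ψ ∈ Γ → φ ∈ Γ → ψ ∈ Γ
  bot_not_mem : Fml.bot ∉ Γ
  disj : ∀ φ ψ, Fml.or φ ψ ∈ Γ → φ ∈ Γ ∨ ψ ∈ Γ

def diaSet (Γ : Set Fml) : Set Fml := {φ | Fml.dia φ ∈ Γ}
def boxSet (Γ : Set Fml) : Set Fml := {φ | Fml.box φ ∈ Γ}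

/-- The canonical modal relation on μIS5-theories. -/
def equivC (Γ Δ : Set Fml) : Prop := Δ ⊆ diaSet Γ ∧ boxSet Γ ⊆ Δ
namespace Canon

/-- Hilbert-style derivability from a set of hypotheses, using only the
axioms and modus ponens. -/
inductive Ded (T : Set Fml) : Fml → Prop where
  | mem {φ} : φ ∈ T → Ded T φ
  | ax {φ} : Ax φ → Ded T φ
  | mp {φ ψ} : Ded T (Fml.imp φ ψ) → Ded T φ → Ded T ψ

theorem Ded.mono {S T : Set Fml} (h : S ⊆ T) {φ : Fml} (hd : Ded S φ) : Ded T φ := by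
  induction hd with
  | mem h' => exact .mem (h h')
  | ax a => exact .ax a
  | mp _ _ ih1 ih2 => exact .mp ih1 ih2

theorem ded_impSelf (T : Set Fml) (φ : Fml) : Ded T (Fml.imp φ φ) :=
  .mp (.mp (.ax (Ax.k2 φ (Fml.imp φ φ) φ)) (.ax (Ax.k1 φ (Fml.imp φ φ)))) (.ax (Ax.k1 φ φ))

theorem Ded.deduction {T : Set Fml} {A B : Fml} (h : Ded (insert A T) B) :
    Ded T (Fml.imp A B) := by
  induction h with
  | mem h' =>
    rcases h' with h' | h'
    · exact h' ▸ ded_impSelf T A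
    · exact .mp (.ax (Ax.k1 _ _)) (.mem h')
  | ax a => exact .mp (.ax (Ax.k1 _ _)) (.ax a)
  | mp _ _ ih1 ih2 => exact .mp (.mp (.ax (Ax.k2 _ _ _)) ih1) ih2

theorem Ded.cut {T : Set Fml} {A B : Fml} (h1 : Ded T A) (h2 : Ded (insert A T) B) :
    Ded T B :=
  .mp h2.deduction h1

theorem Ded.comp {T : Set Fml} {A B C : Fml} (h1 : Ded T (Fml.imp A B))
    (h2 : Ded T (Fml.imp B C)) : Ded T (Fml.imp A C) :=
  Ded.deduction (.mp (h2.mono (Set.subset_insert _ _))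
    (.mp (h1.mono (Set.subset_insert _ _)) (.mem (Set.mem_insert _ _))))

theorem theory_ded {T S : Set Fml} (hT : IsTheory T) (hS : S ⊆ T) {φ : Fml}
    (h : Ded S φ) : φ ∈ T := by
  induction h with
  | mem h' => exact hS h'
  | ax a => exact hT.ax_mem _ a
  | mp _ _ ih1 ih2 => exact hT.mp_closed _ _ ih1 ih2

/-! ### The canonical relation is an equivalence -/

theorem equivC_refl {Γ : Set Fml} (h : IsTheory Γ) : equivC Γ Γ :=
  ⟨fun φ hφ => h.mp_closed _ _ (h.ax_mem _ (Ax.t2 φ)) hφ,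
   fun φ hφ => h.mp_closed _ _ (h.ax_mem _ (Ax.t1 φ)) hφ⟩

theorem equivC_symm {Γ Δ : Set Fml} (hΓ : IsTheory Γ) (hΔ : IsTheory Δ)
    (h : equivC Γ Δ) : equivC Δ Γ := by
  obtain ⟨h1, h2⟩ := h
  constructor
  · intro φ hφ
    have d1 : Fml.dia φ ∈ Γ := hΓ.mp_closed _ _ (hΓ.ax_mem _ (Ax.t2 φ)) hφ
    have d2 : Fml.box (Fml.dia φ) ∈ Γ := hΓ.mp_closed _ _ (hΓ.ax_mem _ (Ax.five1 φ)) d1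
    exact h2 d2
  · intro φ hφ
    have d1 : Fml.dia (Fml.box φ) ∈ Γ := h1 hφ
    have d2 : Fml.box φ ∈ Γ := hΓ.mp_closed _ _ (hΓ.ax_mem _ (Ax.five2 φ)) d1
    exact hΓ.mp_closed _ _ (hΓ.ax_mem _ (Ax.t1 φ)) d2

theorem equivC_trans {Γ Δ Θ : Set Fml} (hΓ : IsTheory Γ)
    (h1 : equivC Γ Δ) (h2 : equivC Δ Θ) : equivC Γ Θ := by
  constructor
  · intro φ hφ
    have d1 : Fml.dia φ ∈ Δ := h2.1 hφ
    have d2 : Fml.dia (Fml.dia φ) ∈ Γ := h1.1 d1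
    exact hΓ.mp_closed _ _ (hΓ.ax_mem _ (Ax.four2 φ)) d2
  · intro φ hφ
    have b2 : Fml.box (Fml.box φ) ∈ Γ := hΓ.mp_closed _ _ (hΓ.ax_mem _ (Ax.four1 φ)) hφ
    exact h2.2 (h1.2 b2)

/-! ### Chains of diamond hypotheses -/

def dctx (φs : List Fml) (T : Set Fml) : Set Fml :=
  φs.foldr (fun φ s => insert (Fml.dia φ) s) T

def dchain (φs : List Fml) (χ : Fml) : Fml :=
  φs.foldr (fun φ C => Fml.imp (Fml.dia φ) C) χ

def ichain (φs : List Fml) (χ : Fml) : Fml := φs.foldr Fml.imp χ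

theorem subset_dctx (φs : List Fml) (T : Set Fml) : T ⊆ dctx φs T := by
  induction φs with
  | nil => exact subset_rfl
  | cons a φs ih => exact ih.trans (Set.subset_insert _ _)

theorem mem_dctx {φs : List Fml} {φ : Fml} (h : φ ∈ φs) (T : Set Fml) :
    Fml.dia φ ∈ dctx φs T := by
  induction φs with
  | nil => cases h
  | cons a φs ih =>
    rcases List.mem_cons.1 h with rfl | h
    · exact Set.mem_insert _ _
    · exact Set.mem_insert_of_mem _ (ih h)

theorem dctx_subset {φs : List Fml} {S T : Set Fml} (h : S ⊆ T)
    (hd : ∀ φ ∈ φs, Fml.dia φ ∈ T) : dctx φs S ⊆ T := by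
  induction φs with
  | nil => exact h
  | cons φ φs ih =>
    intro x hx
    rcases hx with rfl | hx
    · exact hd φ (by simp)
    · exact ih (fun ψ hψ => hd ψ (by simp [hψ])) hx

theorem dctx_insert (φs : List Fml) (a : Fml) (T : Set Fml) :
    dctx φs (insert a T) = insert a (dctx φs T) := by
  induction φs with
  | nil => rfl
  | cons φ φs ih => simp only [dctx, List.foldr] at ih ⊢; rw [ih, Set.insert_comm]

theorem dchain_intro {T : Set Fml} {φs : List Fml} {χ : Fml}
    (h : Ded (dctx φs T) χ) : Ded T (dchain φs χ) := by
  induction φs generalizing T with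
  | nil => exact h
  | cons φ φs ih =>
    exact Ded.deduction (ih (by rw [dctx_insert]; exact h))

theorem dchain_mono {T : Set Fml} {B C : Fml} (φs : List Fml)
    (h : Ded T (Fml.imp B C)) :
    Ded T (Fml.imp (dchain φs B) (dchain φs C)) := by
  induction φs with
  | nil => exact h
  | cons φ φs ih =>
    apply Ded.deduction
    apply Ded.deduction
    have hB : Ded (insert (Fml.dia φ)
        (insert (Fml.imp (Fml.dia φ) (dchain φs B)) T)) (dchain φs B) :=
      .mp (.mem (Set.mem_insert_of_mem _ (Set.mem_insert _ _))) (.mem (Set.mem_insert _ _))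
    exact .mp (ih.mono fun x hx =>
      Set.mem_insert_of_mem _ (Set.mem_insert_of_mem _ hx)) hB

theorem dchain_box (T : Set Fml) (φs : List Fml) (B : Fml) :
    Ded T (Fml.imp (dchain φs (Fml.box B)) (Fml.box (ichain φs B))) := by
  induction φs with
  | nil => exact ded_impSelf T (Fml.box B)
  | cons φ φs ih =>
    apply Ded.deduction
    have h1 : Ded (insert (Fml.dia φ)
        (insert (Fml.imp (Fml.dia φ) (dchain φs (Fml.box B))) T))
        (Fml.box (ichain φs B)) := by
      have hd : Ded (insert (Fml.dia φ)
          (insert (Fml.imp (Fml.dia φ) (dchain φs (Fml.box B))) T))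
          (dchain φs (Fml.box B)) :=
        .mp (.mem (Set.mem_insert_of_mem _ (Set.mem_insert _ _)))
          (.mem (Set.mem_insert _ _))
      exact .mp (ih.mono fun x hx =>
        Set.mem_insert_of_mem _ (Set.mem_insert_of_mem _ hx)) hd
    exact .mp (.ax (Ax.fs φ (ichain φs B))) h1.deduction

theorem ichain_elim {T : Set Fml} (hT : IsTheory T) {φs : List Fml} {χ : Fml}
    (h : ichain φs χ ∈ T) (hm : ∀ φ ∈ φs, φ ∈ T) : χ ∈ T := by
  induction φs with
  | nil => exact h
  | cons φ φs ih =>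
    exact ih (hT.mp_closed _ _ h (hm φ (by simp))) (fun ψ hψ => hm ψ (by simp [hψ]))

/-! ### Disjunctions of forbidden formulas -/

inductive DisjOf (D : Set Fml) : Fml → Prop where
  | bot : DisjOf D Fml.bot
  | box {ψ} : ψ ∉ D → DisjOf D (Fml.box ψ)
  | or {χ₁ χ₂} : DisjOf D χ₁ → DisjOf D χ₂ → DisjOf D (Fml.or χ₁ χ₂)

theorem disj_contra {D : Set Fml} (hD : IsTheory D) {χ : Fml} (h : DisjOf D χ) :
    Fml.dia χ ∈ D → False := by
  induction h with
  | bot =>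
    intro hχ
    have hn : Fml.neg (Fml.dia Fml.bot) ∈ D := hD.ax_mem _ Ax.n
    have himp : Fml.imp (Fml.dia Fml.bot) Fml.bot ∈ D :=
      hD.mp_closed _ _ (hD.ax_mem _ (Ax.negE _)) hn
    exact hD.bot_not_mem (hD.mp_closed _ _ himp hχ)
  | @box ψ hψ =>
    intro hχ
    have hb : Fml.box ψ ∈ D := hD.mp_closed _ _ (hD.ax_mem _ (Ax.five2 ψ)) hχ
    exact hψ (hD.mp_closed _ _ (hD.ax_mem _ (Ax.t1 ψ)) hb)
  | @or χ₁ χ₂ _ _ ih1 ih2 =>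
    intro hχ
    have hor : Fml.or (Fml.dia χ₁) (Fml.dia χ₂) ∈ D :=
      hD.mp_closed _ _ (hD.ax_mem _ (Ax.dp χ₁ χ₂)) hχ
    rcases hD.disj _ _ hor with h | h
    exacts [ih1 h, ih2 h]

/-! ### The base set is consistent with the forbidden set -/

theorem base_inv {Γ Δ' : Set Fml} (hΓ : IsTheory Γ) {χ : Fml}
    (h : Ded (Γ ∪ Fml.dia '' Δ') χ) :
    ∃ γ ∈ Γ, ∃ φs : List Fml, (∀ φ ∈ φs, φ ∈ Δ') ∧ Ded (dctx φs {γ}) χ := by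
  induction h with
  | mem h' =>
    rcases h' with h' | ⟨φ, hφ, rfl⟩
    · exact ⟨_, h', [], by simp, .mem rfl⟩
    · exact ⟨Fml.top, hΓ.ax_mem _ Ax.topI, [φ], by simp [hφ], .mem (Set.mem_insert _ _)⟩
  | ax a => exact ⟨Fml.top, hΓ.ax_mem _ Ax.topI, [], by simp, .ax a⟩
  | @mp A B _ _ ih1 ih2 =>
    obtain ⟨γ₁, hγ₁, φs₁, hφs₁, d₁⟩ := ih1
    obtain ⟨γ₂, hγ₂, φs₂, hφs₂, d₂⟩ := ih2
    refine ⟨Fml.and γ₁ γ₂,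
      hΓ.mp_closed _ _ (hΓ.mp_closed _ _ (hΓ.ax_mem _ (Ax.andI γ₁ γ₂)) hγ₁) hγ₂,
      φs₁ ++ φs₂, ?_, ?_⟩
    · intro φ hφ
      rcases List.mem_append.1 hφ with h | h
      exacts [hφs₁ φ h, hφs₂ φ h]
    · set C := dctx (φs₁ ++ φs₂) ({Fml.and γ₁ γ₂} : Set Fml) with hC
      have hγC : Fml.and γ₁ γ₂ ∈ C := subset_dctx _ _ rfl
      have c1 : Ded C γ₁ := .mp (.ax (Ax.andE1 γ₁ γ₂)) (.mem hγC)
      have c2 : Ded C γ₂ := .mp (.ax (Ax.andE2 γ₁ γ₂)) (.mem hγC)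
      have e1 : Ded C (Fml.imp A B) := by
        refine Ded.cut c1 (d₁.mono (dctx_subset ?_ ?_))
        · intro x hx; rcases hx with rfl; exact Set.mem_insert _ _
        · intro φ hφ
          exact Set.mem_insert_of_mem _ (mem_dctx (List.mem_append_left _ hφ) _)
      have e2 : Ded C A := by
        refine Ded.cut c2 (d₂.mono (dctx_subset ?_ ?_))
        · intro x hx; rcases hx with rfl; exact Set.mem_insert _ _
        · intro φ hφ
          exact Set.mem_insert_of_mem _ (mem_dctx (List.mem_append_right _ hφ) _)
      exact .mp e1 e2

theorem base_not_bad {Γ Δ Δ' : Set Fml} (hΓ : IsTheory Γ) (hΔ' : IsTheory Δ')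
    (hbox : boxSet Γ ⊆ Δ) (hsub : Δ ⊆ Δ') {χ : Fml} (hdisj : DisjOf Δ' χ)
    (h : Ded (Γ ∪ Fml.dia '' Δ') χ) : False := by
  obtain ⟨γ, hγ, φs, hφs, d⟩ := base_inv hΓ h
  have d1 : Ded ({γ} : Set Fml) (dchain φs χ) := dchain_intro d
  have step : Ded ({γ} : Set Fml) (Fml.imp χ (Fml.box (Fml.dia χ))) :=
    Ded.comp (.ax (Ax.t2 χ)) (.ax (Ax.five1 χ))
  have d2 : Ded ({γ} : Set Fml) (dchain φs (Fml.box (Fml.dia χ))) :=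
    .mp (dchain_mono φs step) d1
  have d3 : Ded ({γ} : Set Fml) (Fml.box (ichain φs (Fml.dia χ))) :=
    .mp (dchain_box _ φs (Fml.dia χ)) d2
  have d4 : Ded (∅ : Set Fml) (Fml.imp γ (Fml.box (ichain φs (Fml.dia χ)))) :=
    Ded.deduction (d3.mono (by simp))
  have hin : Fml.imp γ (Fml.box (ichain φs (Fml.dia χ))) ∈ Γ :=
    theory_ded hΓ (Set.empty_subset _) d4
  have hb : Fml.box (ichain φs (Fml.dia χ)) ∈ Γ := hΓ.mp_closed _ _ hin hγ
  have hbb : Fml.box (Fml.box (ichain φs (Fml.dia χ))) ∈ Γ :=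
    hΓ.mp_closed _ _ (hΓ.ax_mem _ (Ax.four1 _)) hb
  have hbΔ' : Fml.box (ichain φs (Fml.dia χ)) ∈ Δ' := hsub (hbox hbb)
  have hi : ichain φs (Fml.dia χ) ∈ Δ' :=
    hΔ'.mp_closed _ _ (hΔ'.ax_mem _ (Ax.t1 _)) hbΔ'
  exact disj_contra hΔ' hdisj (ichain_elim hΔ' hi hφs)

/-! ### The Zorn extension lemma -/

def Bad (Δ' T : Set Fml) : Prop := ∃ χ, DisjOf Δ' χ ∧ Ded T χ

theorem ded_sUnion {c : Set (Set Fml)} (hchain : IsChain (· ⊆ ·) c)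
    (hne : c.Nonempty) {χ : Fml} (h : Ded (⋃₀ c) χ) : ∃ T ∈ c, Ded T χ := by
  induction h with
  | mem h' =>
    obtain ⟨T, hT, hx⟩ := h'
    exact ⟨T, hT, .mem hx⟩
  | ax a =>
    obtain ⟨T, hT⟩ := hne
    exact ⟨T, hT, .ax a⟩
  | mp _ _ ih1 ih2 =>
    obtain ⟨T1, hT1, e1⟩ := ih1
    obtain ⟨T2, hT2, e2⟩ := ih2
    rcases hchain.total hT1 hT2 with h | h
    · exact ⟨T2, hT2, .mp (e1.mono h) e2⟩
    · exact ⟨T1, hT1, .mp e1 (e2.mono h)⟩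

theorem backward_ext {Γ Δ Δ' : Set Fml} (hΓ : IsTheory Γ) (hΔ' : IsTheory Δ')
    (hR : equivC Γ Δ) (hsub : Δ ⊆ Δ') :
    ∃ Γ', IsTheory Γ' ∧ Γ ⊆ Γ' ∧ equivC Γ' Δ' := by
  set T₀ : Set Fml := Γ ∪ Fml.dia '' Δ' with hT₀
  set S : Set (Set Fml) := {T | T₀ ⊆ T ∧ ¬ Bad Δ' T} with hS
  have hT₀S : T₀ ∈ S :=
    ⟨subset_rfl, fun ⟨χ, hχ, hd⟩ => base_not_bad hΓ hΔ' hR.2 hsub hχ hd⟩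
  have hchain_cond : ∀ c ⊆ S, IsChain (· ⊆ ·) c → c.Nonempty →
      ∃ ub ∈ S, ∀ s ∈ c, s ⊆ ub := by
    intro c hc hchain hne
    refine ⟨⋃₀ c, ⟨(hc hne.choose_spec).1.trans (Set.subset_sUnion_of_mem hne.choose_spec), ?_⟩,
      fun s hs => Set.subset_sUnion_of_mem hs⟩
    rintro ⟨χ, hχ, hd⟩
    obtain ⟨T, hT, hdT⟩ := ded_sUnion hchain hne hd
    exact (hc hT).2 ⟨χ, hχ, hdT⟩
  obtain ⟨Γ', hsub', hmax⟩ := zorn_subset_nonempty S hchain_cond T₀ hT₀S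
  have hnotbad : ¬ Bad Δ' Γ' := hmax.prop.2
  have hT₀Γ' : T₀ ⊆ Γ' := hmax.prop.1
  have hclosed : ∀ φ, Ded Γ' φ → φ ∈ Γ' := by
    intro φ hφ
    have hmem : insert φ Γ' ∈ S := by
      refine ⟨hT₀Γ'.trans (Set.subset_insert _ _), ?_⟩
      rintro ⟨χ, hχ, hd⟩
      exact hnotbad ⟨χ, hχ, Ded.cut hφ hd⟩
    exact (Set.insert_subset_iff.1 (hmax.2 hmem (Set.subset_insert _ _))).1
  have htheory : IsTheory Γ' := by
    refine ⟨fun φ a => hclosed φ (.ax a),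
      fun φ ψ h1 h2 => hclosed ψ (.mp (.mem h1) (.mem h2)), ?_, ?_⟩
    · intro hb
      exact hnotbad ⟨Fml.bot, DisjOf.bot, .mem hb⟩
    · intro φ ψ hor
      by_contra hcon
      push_neg at hcon
      obtain ⟨hφ, hψ⟩ := hcon
      have badφ : Bad Δ' (insert φ Γ') := by
        by_contra hb
        have hmem : insert φ Γ' ∈ S := ⟨hT₀Γ'.trans (Set.subset_insert _ _), hb⟩
        exact hφ ((Set.insert_subset_iff.1 (hmax.2 hmem (Set.subset_insert _ _))).1)
      have badψ : Bad Δ' (insert ψ Γ') := by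
        by_contra hb
        have hmem : insert ψ Γ' ∈ S := ⟨hT₀Γ'.trans (Set.subset_insert _ _), hb⟩
        exact hψ ((Set.insert_subset_iff.1 (hmax.2 hmem (Set.subset_insert _ _))).1)
      obtain ⟨χ₁, hχ₁, hd₁⟩ := badφ
      obtain ⟨χ₂, hχ₂, hd₂⟩ := badψ
      have o1 : Ded Γ' (Fml.imp φ (Fml.or χ₁ χ₂)) :=
        Ded.comp hd₁.deduction (.ax (Ax.orI1 χ₁ χ₂))
      have o2 : Ded Γ' (Fml.imp ψ (Fml.or χ₁ χ₂)) :=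
        Ded.comp hd₂.deduction (.ax (Ax.orI2 χ₁ χ₂))
      have hdd : Ded Γ' (Fml.or χ₁ χ₂) :=
        .mp (.mp (.mp (.ax (Ax.orE φ ψ (Fml.or χ₁ χ₂))) o1) o2) (.mem hor)
      exact hnotbad ⟨_, DisjOf.or hχ₁ hχ₂, hdd⟩
  refine ⟨Γ', htheory, fun x hx => hT₀Γ' (Or.inl hx), ?_, ?_⟩
  · intro φ hφ
    exact hT₀Γ' (Or.inr ⟨φ, hφ, rfl⟩)
  · intro ψ hψ
    by_contra hn
    exact hnotbad ⟨_, DisjOf.box hn, .mem hψ⟩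

end Canon

/-- The canonical μIS5-model is an IS5-model: the μIS5-theories
with inclusion, the canonical modal relation, the canonical valuation, and no
fallible worlds form an IS5-model. -/
theorem canonical_is_IS5Model :
    ∃ M : IS5Model {Γ : Set Fml // IsTheory Γ},
      M.fall = ∅ ∧
      M.le = (fun Γ Δ => Γ.1 ⊆ Δ.1) ∧
      M.R = (fun Γ Δ => equivC Γ.1 Δ.1) ∧
      M.V = (fun p => {Γ | Fml.prop p ∈ Γ.1}) := by
  refine ⟨{
    fall := ∅
    le := fun Γ Δ => Γ.1 ⊆ Δ.1
    R := fun Γ Δ => equivC Γ.1 Δ.1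
    V := fun p => {Γ | Fml.prop p ∈ Γ.1}
    le_refl := fun w => subset_rfl
    le_trans := fun h1 h2 => h1.trans h2
    persist := fun p {w v} h hw => h hw
    fall_V := fun p => Set.empty_subset _
    fall_le := fun {w v} h _ => (Set.notMem_empty w h).elim
    fall_R := fun {w v} h _ => (Set.notMem_empty w h).elim
    fall_empty := rfl
    R_equiv := ⟨fun Γ => Canon.equivC_refl Γ.2,
      fun {Γ Δ} h => Canon.equivC_symm Γ.2 Δ.2 h,
      fun {Γ Δ Θ} h1 h2 => Canon.equivC_trans Γ.2 h1 h2⟩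
    forward := ?_
    backward := ?_ }, rfl, rfl, rfl, rfl⟩
  · -- forward confluence
    rintro ⟨Γ, hΓ⟩ ⟨Δ, hΔ⟩ ⟨Γ2, hΓ2⟩ hR hle
    obtain ⟨Δ2, ht, hsub, hR'⟩ :=
      Canon.backward_ext hΔ hΓ2 (Canon.equivC_symm hΓ hΔ hR) hle
    exact ⟨⟨Δ2, ht⟩, hsub, Canon.equivC_symm ht hΓ2 hR'⟩
  · -- backward confluence
    rintro ⟨Γ, hΓ⟩ ⟨Δ, hΔ⟩ ⟨Δ2, hΔ2⟩ hR hle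
    obtain ⟨Γ2, ht, hsub, hR'⟩ := Canon.backward_ext hΓ hΔ2 hR hle
    exact ⟨⟨Γ2, ht⟩, hsub, hR'⟩
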